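/- Fix a, b, c > 0 with a + b + c = 1. The function ζ(z) = z·ν(z) is strictly increasing on (0,∞), with lim_{z→0⁺} ζ(z) = 0 and lim_{z→∞} ζ(z) = ∞. Consequently, for every ψ ≥ 0 there is a unique z_ψ ≥ 0 with ζ(z_ψ) = ψ. -/

import Mathlib

/-! The radicand of the second root is `L² + 4bc·z(z+1)`, where `L = (b-c)z - a - c` is the linear
part of `ζ`. So for `z > 0` it is positive and its root `s` dominates `|L|`, and at `z = 0` it is
`(a+c)²`, whence `ζ(0) = 0`. In particular `ζ(z) ≥ z - 1`, giving the limit at infinity.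
For monotonicity, `ζ'` is the sum of `(2z+1)/(2√(z²+z+1)) > 1/2` and a remainder `≥ -1/2`;
the latter amounts to `(b-c)(L+s) + s ≥ 0`, which is clear when `b ≥ c`, and follows from `L < 0` and
`c - b ≤ 1` when `b < c`. Existence of `z_ψ` is then the intermediate value theorem, and uniqueness
is strict monotonicity. -/

open Real Filter

/-- The function `ζ(z)` from the arctic-curve parametrization (with `ζ(0) = 0`). -/
noncomputable def zeta (a b c z : ℝ) : ℝ :=
  Real.sqrt (z ^ 2 + z + 1) + Real.sqrt ((z * b + z * c + a + c) ^ 2 - 4 * a * b * z) / 2 +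
    ((b - c) * z - a - c) / 2 - 1

open Set

section

variable {a b c : ℝ}

lemma zeta_radicand_eq (a b c z : ℝ) :
    (z * b + z * c + a + c) ^ 2 - 4 * a * b * z =
      ((b - c) * z - a - c) ^ 2 + 4 * (b * c) * (z * (z + 1)) := by
  ring

lemma abs_le_sqrt_zeta_radicand (hb : 0 ≤ b) (hc : 0 ≤ c) {z : ℝ} (hz : 0 ≤ z) :
    |(b - c) * z - a - c| ≤ √((z * b + z * c + a + c) ^ 2 - 4 * a * b * z) := by
  refine Real.abs_le_sqrt ?_
  rw [zeta_radicand_eq]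
  have : 0 ≤ 4 * (b * c) * (z * (z + 1)) := by positivity
  linarith

lemma zeta_radicand_pos (hb : 0 < b) (hc : 0 < c) {z : ℝ} (hz : 0 < z) :
    0 < (z * b + z * c + a + c) ^ 2 - 4 * a * b * z := by
  rw [zeta_radicand_eq]
  positivity

lemma continuous_zeta (a b c : ℝ) : Continuous (zeta a b c) := by
  unfold zeta
  fun_prop

lemma zeta_zero (hac : 0 ≤ a + c) : zeta a b c 0 = 0 := by
  have : (0 * b + 0 * c + a + c) ^ 2 - 4 * a * b * 0 = (a + c) ^ 2 := by ring
  simp only [zeta, this, Real.sqrt_sq hac]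
  norm_num
  ring

lemma sub_one_le_zeta (hb : 0 ≤ b) (hc : 0 ≤ c) {z : ℝ} (hz : 0 ≤ z) : z - 1 ≤ zeta a b c z := by
  have h₁ : z ≤ √(z ^ 2 + z + 1) := Real.le_sqrt_of_sq_le (by linarith)
  have h₂ := (neg_le_abs _).trans (abs_le_sqrt_zeta_radicand (a := a) hb hc hz)
  unfold zeta
  linarith

lemma tendsto_zeta_atTop (hb : 0 ≤ b) (hc : 0 ≤ c) : Tendsto (zeta a b c) atTop atTop :=
  tendsto_atTop_mono' _ ((eventually_ge_atTop 0).mono fun _ hz ↦ sub_one_le_zeta hb hc hz)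
    (tendsto_atTop_add_const_right _ (-1) tendsto_id)

noncomputable def zetaDeriv (a b c z : ℝ) : ℝ :=
  (2 * z + 1) / (2 * √(z ^ 2 + z + 1)) +
    ((b + c) * (z * b + z * c + a + c) - 2 * a * b) /
      (2 * √((z * b + z * c + a + c) ^ 2 - 4 * a * b * z)) + (b - c) / 2

lemma hasDerivAt_zeta {z : ℝ} (hQ : 0 < (z * b + z * c + a + c) ^ 2 - 4 * a * b * z) :
    HasDerivAt (zeta a b c) (zetaDeriv a b c z) z := by
  have hP : 0 < z ^ 2 + z + 1 := by nlinarith [sq_nonneg (2 * z + 1)]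
  have hP' : HasDerivAt (fun z : ℝ ↦ z ^ 2 + z + 1) (2 * z + 1) z :=
    ((((hasDerivAt_id' z).pow 2).add (hasDerivAt_id' z)).add_const 1).congr_deriv (by ring)
  have hlin : HasDerivAt (fun z : ℝ ↦ z * b + z * c + a + c) (b + c) z :=
    (((((hasDerivAt_id' z).mul_const b).add ((hasDerivAt_id' z).mul_const c)).add_const
      a).add_const c).congr_deriv (by ring)
  have hQ' : HasDerivAt (fun z : ℝ ↦ (z * b + z * c + a + c) ^ 2 - 4 * a * b * z)
      (2 * (b + c) * (z * b + z * c + a + c) - 4 * a * b) z :=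
    ((hlin.pow 2).sub ((hasDerivAt_id' z).const_mul (4 * a * b))).congr_deriv (by ring)
  have hL' : HasDerivAt (fun z : ℝ ↦ ((b - c) * z - a - c) / 2) ((b - c) / 2) z :=
    (((((hasDerivAt_id' z).const_mul (b - c)).sub_const a).sub_const c).div_const 2).congr_deriv
      (by ring)
  refine ((((hP'.sqrt hP.ne').add ((hQ'.sqrt hQ.ne').div_const 2)).add hL').sub_const
    1).congr_deriv ?_
  have := Real.sqrt_pos.2 hQ
  unfold zetaDeriv
  field_simp
  ring

lemma one_half_lt_div_sqrt {z : ℝ} (hz : 0 < z) :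
    1 / 2 < (2 * z + 1) / (2 * √(z ^ 2 + z + 1)) := by
  have hlt : √(z ^ 2 + z + 1) < 2 * z + 1 := (Real.sqrt_lt' (by linarith)).2 (by nlinarith)
  have hpos : 0 < √(z ^ 2 + z + 1) := Real.sqrt_pos.2 (by positivity)
  rw [div_lt_div_iff₀ two_pos (by positivity)]
  linarith

lemma neg_one_half_le_zetaDeriv_sub (hb : 0 < b) (hc : 0 < c) (hac : 0 ≤ a + c) (hcb : c ≤ b + 1)
    {z : ℝ} (hz : 0 < z) : -1 / 2 ≤ zetaDeriv a b c z - (2 * z + 1) / (2 * √(z ^ 2 + z + 1)) := by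
  rw [zetaDeriv, add_assoc, add_sub_cancel_left]
  set s := √((z * b + z * c + a + c) ^ 2 - 4 * a * b * z)
  set L := (b - c) * z - a - c
  have hs : 0 < s := Real.sqrt_pos.2 (zeta_radicand_pos hb hc hz)
  have hLs : 0 ≤ L + s := by
    have := abs_le_sqrt_zeta_radicand (a := a) hb.le hc.le hz.le
    linarith [neg_abs_le L]
  have hcross : 0 ≤ (b - c) * (L + s) + s := by
    rcases le_total c b with hcb' | hbc
    · have := mul_nonneg (sub_nonneg.2 hcb') hLs
      linarith
    · have hL : L ≤ 0 := by nlinarith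
      nlinarith
  have hnum : (b + c) * (z * b + z * c + a + c) - 2 * a * b =
      (b - c) * L + 2 * (b * c) * (2 * z + 1) := by
    ring
  have : ((b - c) * L + 2 * (b * c) * (2 * z + 1)) / (2 * s) + (b - c) / 2 - -1 / 2 =
      ((b - c) * (L + s) + s + 2 * (b * c) * (2 * z + 1)) / (2 * s) := by
    field_simp
    ring
  rw [hnum, ← sub_nonneg, this]
  have : 0 ≤ 2 * (b * c) * (2 * z + 1) := by positivity
  positivity

lemma zetaDeriv_pos (hb : 0 < b) (hc : 0 < c) (hac : 0 ≤ a + c) (hcb : c ≤ b + 1) {z : ℝ}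
    (hz : 0 < z) : 0 < zetaDeriv a b c z := by
  linarith [one_half_lt_div_sqrt hz, neg_one_half_le_zetaDeriv_sub hb hc hac hcb hz]

lemma zeta_strictMonoOn (hb : 0 < b) (hc : 0 < c) (hac : 0 ≤ a + c) (hcb : c ≤ b + 1) :
    StrictMonoOn (zeta a b c) (Ici 0) := by
  refine strictMonoOn_of_deriv_pos (convex_Ici 0) (continuous_zeta a b c).continuousOn
    fun z hz ↦ ?_
  rw [interior_Ici] at hz
  rw [(hasDerivAt_zeta (zeta_radicand_pos hb hc hz)).deriv]
  exact zetaDeriv_pos hb hc hac hcb hz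

end

theorem zeta_strictMono_surjective (a b c : ℝ) (ha : 0 < a) (hb : 0 < b) (hc : 0 < c)
    (habc : a + b + c = 1) :
    StrictMonoOn (zeta a b c) (Set.Ici 0) ∧
    Tendsto (zeta a b c) (nhdsWithin 0 (Set.Ioi 0)) (nhds 0) ∧
    Tendsto (zeta a b c) atTop atTop ∧
    (∀ ψ : ℝ, 0 ≤ ψ → ∃! z : ℝ, 0 ≤ z ∧ zeta a b c z = ψ) := by
  have hmono := zeta_strictMonoOn (a := a) hb hc (by linarith) (by linarith)
  have hzero : zeta a b c 0 = 0 := zeta_zero (by linarith)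
  have htop := tendsto_zeta_atTop (a := a) hb.le hc.le
  refine ⟨hmono, ?_, htop, fun ψ hψ ↦ ?_⟩
  · simpa only [hzero] using ((continuous_zeta a b c).tendsto 0).mono_left nhdsWithin_le_nhds
  · obtain ⟨z, hz, rfl⟩ :=
      intermediate_value_Ici (continuous_zeta a b c).continuousOn htop (hzero ▸ hψ)
    exact ⟨z, ⟨hz, rfl⟩, fun y hy ↦ hmono.injOn hy.1 hz hy.2⟩
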